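/- Let G₁ and G₂ be finite groups and p a prime. Then ∑_{H} μ(H)·|C_{G₁×G₂}(H)| = (∑_{H₁} μ(H₁)·|C_{G₁}(H₁)|) · (∑_{H₂} μ(H₂)·|C_{G₂}(H₂)|), where the sums run over all p-subgroups (including trivial) of G₁×G₂, G₁, G₂ respectively, μ(H) = μ(1,H) is the Möbius function of the subgroup lattice, and C denotes centralizer. -/

import Mathlib

/-!
A subgroup `H ≤ G₁ × G₂` is a `p`-group iff both projections are, and its centralizer is the
product of the centralizers of its projections, so each summand on the left depends on `H` only
through `μ(⊥, H)` and a multiplicative function of `(π₁ H, π₂ H)`. The map `H ↦ (π₁ H, π₂ H)` is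
left adjoint to `(K₁, K₂) ↦ K₁ × K₂`, which sends only `(⊥, ⊥)` to `⊥`; Rota's Galois-connection
argument then shows that summing `μ(⊥, H)` over a fibre gives the Möbius function of the product
lattice, namely `μ₁(⊥, K₁) · μ₂(⊥, K₂)`.
-/

open Finset

section Mobius

variable {α β R : Type*}

/-- `f a` is the Möbius value `μ(⊥, a)`, characterised by its defining recursion. -/
def IsMobiusFromBot [CommRing R] [PartialOrder α] [OrderBot α] [Fintype α] [DecidableEq α]
    [DecidableLE α] (f : α → R) : Prop :=
  ∀ b, ∑ a ∈ univ.filter (· ≤ b), f a = if b = ⊥ then 1 else 0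

theorem eq_of_forall_sum_filter_le_eq [AddCancelCommMonoid R] [PartialOrder α] [Fintype α]
    [DecidableLE α] {f g : α → R}
    (h : ∀ b, ∑ a ∈ univ.filter (· ≤ b), f a = ∑ a ∈ univ.filter (· ≤ b), g a) (b : α) :
    f b = g b := by
  classical
  induction b using WellFoundedLT.induction with
  | ind b ih =>
    have hle : univ.filter (· ≤ b) = insert b (univ.filter (· < b)) := by
      ext a; simp [le_iff_lt_or_eq, or_comm]
    have hlt : ∑ a ∈ univ.filter (· < b), f a = ∑ a ∈ univ.filter (· < b), g a :=
      sum_congr rfl fun a ha => ih a (mem_filter.1 ha).2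
    have hb := h b
    rw [hle, sum_insert (by simp), sum_insert (by simp), hlt] at hb
    exact add_right_cancel hb

variable [CommRing R] [PartialOrder α] [OrderBot α] [Fintype α] [DecidableEq α]
  [DecidableLE α] [PartialOrder β] [OrderBot β] [Fintype β] [DecidableEq β] [DecidableLE β]

theorem IsMobiusFromBot.prod {f : α → R} {g : β → R} (hf : IsMobiusFromBot f)
    (hg : IsMobiusFromBot g) : IsMobiusFromBot fun x : α × β => f x.1 * g x.2 := by
  intro b
  calc ∑ a ∈ univ.filter (· ≤ b), f a.1 * g a.2
      = ∑ a ∈ univ.filter (· ≤ b.1) ×ˢ univ.filter (· ≤ b.2), f a.1 * g a.2 :=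
        sum_congr (by ext; simp [Prod.le_def]) fun _ _ => rfl
    _ = if b = ⊥ then 1 else 0 := by
        rw [sum_product, ← sum_mul_sum, hf, hg, ite_zero_mul_ite_zero, mul_one]
        exact if_congr (Prod.ext_iff (x := b) (y := ⊥)).symm rfl rfl

/-- Rota's Galois-connection theorem, for the Möbius function from `⊥`. -/
theorem IsMobiusFromBot.sum_fiber {l : α → β} {u : β → α} (gc : GaloisConnection l u)
    (hu : ∀ b, u b = ⊥ ↔ b = ⊥) {f : α → R} {g : β → R} (hf : IsMobiusFromBot f)
    (hg : IsMobiusFromBot g) (b : β) : ∑ a ∈ univ.filter (l · = b), f a = g b := by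
  refine eq_of_forall_sum_filter_le_eq (f := fun b => ∑ a ∈ univ.filter (l · = b), f a)
    (fun b => ?_) b
  calc ∑ y ∈ univ.filter (· ≤ b), ∑ a ∈ univ.filter (l · = y), f a
      = ∑ a ∈ univ.filter (· ≤ u b), f a := by
        rw [sum_fiberwise_eq_sum_filter]
        exact sum_congr (by ext; simp [gc _ _]) fun _ _ => rfl
    _ = ∑ y ∈ univ.filter (· ≤ b), g y := by rw [hf, hg, if_congr (hu b) rfl rfl]

theorem IsMobiusFromBot.sum_mul_comp {l : α → β} {u : β → α} (gc : GaloisConnection l u)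
    (hu : ∀ b, u b = ⊥ ↔ b = ⊥) {f : α → R} {g : β → R} (hf : IsMobiusFromBot f)
    (hg : IsMobiusFromBot g) (φ : β → R) : ∑ a, f a * φ (l a) = ∑ b, g b * φ b := by
  rw [← sum_fiberwise univ l]
  refine sum_congr rfl fun b _ => ?_
  rw [← hf.sum_fiber gc hu hg b, sum_mul]
  exact sum_congr rfl fun a ha => by rw [(mem_filter.1 ha).2]

end Mobius

theorem IsPGroup.prod {G₁ G₂ : Type*} [Group G₁] [Group G₂] {p : ℕ} (h₁ : IsPGroup p G₁)
    (h₂ : IsPGroup p G₂) : IsPGroup p (G₁ × G₂) := by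
  rintro ⟨x₁, x₂⟩
  obtain ⟨k₁, hk₁⟩ := h₁ x₁
  obtain ⟨k₂, hk₂⟩ := h₂ x₂
  refine ⟨k₁ + k₂, Prod.ext ?_ ?_⟩
  · simp [pow_add, pow_mul, hk₁]
  · simp [pow_add, mul_comm (p ^ k₁), pow_mul, hk₂]

namespace Subgroup

variable {G₁ G₂ : Type*} [Group G₁] [Group G₂]

def projections (H : Subgroup (G₁ × G₂)) : Subgroup G₁ × Subgroup G₂ :=
  (H.map (MonoidHom.fst G₁ G₂), H.map (MonoidHom.snd G₁ G₂))

theorem gc_projections_prod :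
    GaloisConnection (projections (G₁ := G₁) (G₂ := G₂)) fun K => K.1.prod K.2 :=
  fun _ _ => le_prod_iff.symm

theorem isPGroup_iff_projections {p : ℕ} {H : Subgroup (G₁ × G₂)} :
    IsPGroup p H ↔ IsPGroup p H.projections.1 ∧ IsPGroup p H.projections.2 := by
  refine ⟨fun h => ⟨h.map _, h.map _⟩, fun ⟨h₁, h₂⟩ => ?_⟩
  exact ((h₁.prod h₂).of_equiv (prodEquiv _ _).symm).to_le (gc_projections_prod.le_u_l H)

theorem centralizer_eq_prod_projections (H : Subgroup (G₁ × G₂)) :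
    centralizer (H : Set (G₁ × G₂))
      = (centralizer (H.projections.1 : Set G₁)).prod (centralizer (H.projections.2 : Set G₂)) := by
  ext z
  simp only [projections, mem_centralizer_iff, mem_prod, coe_map, Set.forall_mem_image,
    SetLike.mem_coe, MonoidHom.coe_fst, MonoidHom.coe_snd]
  exact ⟨fun h => ⟨fun a ha => congrArg Prod.fst (h a ha), fun a ha => congrArg Prod.snd (h a ha)⟩,
    fun ⟨h₁, h₂⟩ a ha => Prod.ext (h₁ ha) (h₂ ha)⟩

theorem card_centralizer_eq_mul_projections (H : Subgroup (G₁ × G₂)) :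
    Nat.card (centralizer (H : Set (G₁ × G₂)))
      = Nat.card (centralizer (H.projections.1 : Set G₁))
        * Nat.card (centralizer (H.projections.2 : Set G₂)) := by
  rw [centralizer_eq_prod_projections, Nat.card_congr (prodEquiv _ _).toEquiv, Nat.card_prod]

end Subgroup

open Classical in
theorem stmt_13_general {G₁ G₂ : Type*} [Group G₁] [Group G₂]
    [Fintype (Subgroup (G₁ × G₂))] [Fintype (Subgroup G₁)] [Fintype (Subgroup G₂)]
    (p : ℕ)
    (μ : Subgroup (G₁ × G₂) → Subgroup (G₁ × G₂) → ℚ)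
    (hμ : ∀ A B : Subgroup (G₁ × G₂), A ≤ B →
      (∑ L ∈ Finset.univ.filter fun L => A ≤ L ∧ L ≤ B, μ A L) = if A = B then 1 else 0)
    (μ₁ : Subgroup G₁ → Subgroup G₁ → ℚ)
    (hμ₁ : ∀ A B : Subgroup G₁, A ≤ B →
      (∑ L ∈ Finset.univ.filter fun L => A ≤ L ∧ L ≤ B, μ₁ A L) = if A = B then 1 else 0)
    (μ₂ : Subgroup G₂ → Subgroup G₂ → ℚ)
    (hμ₂ : ∀ A B : Subgroup G₂, A ≤ B →
      (∑ L ∈ Finset.univ.filter fun L => A ≤ L ∧ L ≤ B, μ₂ A L) = if A = B then 1 else 0) :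
    (∑ H ∈ Finset.univ.filter fun H : Subgroup (G₁ × G₂) => IsPGroup p H, μ ⊥ H * (Nat.card (Subgroup.centralizer (H : Set (G₁ × G₂))) : ℚ))
      = (∑ H₁ ∈ Finset.univ.filter fun H₁ : Subgroup G₁ => IsPGroup p H₁, μ₁ ⊥ H₁ * (Nat.card (Subgroup.centralizer (H₁ : Set G₁)) : ℚ)) *
        (∑ H₂ ∈ Finset.univ.filter fun H₂ : Subgroup G₂ => IsPGroup p H₂, μ₂ ⊥ H₂ * (Nat.card (Subgroup.centralizer (H₂ : Set G₂)) : ℚ)) := by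
  have hm : IsMobiusFromBot (μ ⊥) := fun B => by simpa [eq_comm] using hμ ⊥ B bot_le
  have hm₁ : IsMobiusFromBot (μ₁ ⊥) := fun B => by simpa [eq_comm] using hμ₁ ⊥ B bot_le
  have hm₂ : IsMobiusFromBot (μ₂ ⊥) := fun B => by simpa [eq_comm] using hμ₂ ⊥ B bot_le
  have hu (K : Subgroup G₁ × Subgroup G₂) : K.1.prod K.2 = ⊥ ↔ K = ⊥ :=
    Subgroup.prod_eq_bot_iff.trans (Prod.ext_iff (x := K) (y := ⊥)).symm
  let φ₁ (K : Subgroup G₁) : ℚ :=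
    if IsPGroup p K then Nat.card (Subgroup.centralizer (K : Set G₁)) else 0
  let φ₂ (K : Subgroup G₂) : ℚ :=
    if IsPGroup p K then Nat.card (Subgroup.centralizer (K : Set G₂)) else 0
  calc _ = ∑ H, μ ⊥ H * (φ₁ H.projections.1 * φ₂ H.projections.2) := by
        rw [sum_filter]
        refine sum_congr rfl fun H _ => ?_
        simp only [φ₁, φ₂, ite_zero_mul_ite_zero]
        simp only [Subgroup.isPGroup_iff_projections, Subgroup.card_centralizer_eq_mul_projections,
          Nat.cast_mul, mul_ite, mul_zero]
    _ = ∑ K : Subgroup G₁ × Subgroup G₂, μ₁ ⊥ K.1 * μ₂ ⊥ K.2 * (φ₁ K.1 * φ₂ K.2) :=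
        hm.sum_mul_comp Subgroup.gc_projections_prod hu (hm₁.prod hm₂) fun K => φ₁ K.1 * φ₂ K.2
    _ = _ := by
        rw [sum_filter, sum_filter, Fintype.sum_mul_sum, Fintype.sum_prod_type]
        simp only [φ₁, φ₂, mul_ite, mul_zero]
        exact sum_congr rfl fun _ _ => sum_congr rfl fun _ _ => by split_ifs <;> ring

open Classical in
theorem stmt_13 {G₁ G₂ : Type*} [Group G₁] [Group G₂] [Fintype G₁] [Fintype G₂]
    [Fintype (Subgroup (G₁ × G₂))] [Fintype (Subgroup G₁)] [Fintype (Subgroup G₂)]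
    (p : ℕ) (hp : p.Prime)
    (μ : Subgroup (G₁ × G₂) → Subgroup (G₁ × G₂) → ℚ)
    (hμ : ∀ A B : Subgroup (G₁ × G₂), A ≤ B →
      (∑ L ∈ Finset.univ.filter fun L => A ≤ L ∧ L ≤ B, μ A L) = if A = B then 1 else 0)
    (μ₁ : Subgroup G₁ → Subgroup G₁ → ℚ)
    (hμ₁ : ∀ A B : Subgroup G₁, A ≤ B →
      (∑ L ∈ Finset.univ.filter fun L => A ≤ L ∧ L ≤ B, μ₁ A L) = if A = B then 1 else 0)
    (μ₂ : Subgroup G₂ → Subgroup G₂ → ℚ)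
    (hμ₂ : ∀ A B : Subgroup G₂, A ≤ B →
      (∑ L ∈ Finset.univ.filter fun L => A ≤ L ∧ L ≤ B, μ₂ A L) = if A = B then 1 else 0) :
    (∑ H ∈ Finset.univ.filter fun H : Subgroup (G₁ × G₂) => IsPGroup p H, μ ⊥ H * (Nat.card (Subgroup.centralizer (H : Set (G₁ × G₂))) : ℚ))
      = (∑ H₁ ∈ Finset.univ.filter fun H₁ : Subgroup G₁ => IsPGroup p H₁, μ₁ ⊥ H₁ * (Nat.card (Subgroup.centralizer (H₁ : Set G₁)) : ℚ)) *
        (∑ H₂ ∈ Finset.univ.filter fun H₂ : Subgroup G₂ => IsPGroup p H₂, μ₂ ⊥ H₂ * (Nat.card (Subgroup.centralizer (H₂ : Set G₂)) : ℚ)) :=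
  stmt_13_general p μ hμ μ₁ hμ₁ μ₂ hμ₂
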